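/- arXiv:1105.3163 — 5 statements merged into one kernel-verified Lean document; each statement's English description precedes it below -/
import Mathlib

section
/- On a gradient Ricci soliton (M^n, g, f) with n ≥ 3 satisfying R_{ij} + ∇_i∇_j f = ρ g_{ij}, the Cotton tensor satisfies C_{ijk} = -W_{ijkl} ∇_l f + D_{ijk}, where D_{ijk} = (1/(n-2))(R_{jk}∇_i f - R_{ik}∇_j f) + (1/(2(n-1)(n-2)))(g_{jk}∇_i R - g_{ik}∇_j R) - (R/((n-1)(n-2)))(g_{jk}∇_i f - g_{ik}∇_j f). -/
open Finset

/-- Kronecker delta: components of the metric in an orthonormal frame. -/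
def kd {n : ℕ} (i j : Fin n) : ℝ := if i = j then 1 else 0

/-- On a gradient Ricci soliton `Ric + Hess f = ρ g` (n ≥ 3), the Cotton
tensor satisfies `C_{ijk} = -W_{ijkl}∇_l f + D_{ijk}`.  All tensors are expressed in an
orthonormal frame at a point; `dRic m i j = ∇_m R_{ij}`, `d3f i j k = ∇_i∇_j∇_k f`,
`Hess i j = ∇_i∇_j f`, `df i = ∇_i f`, `dR i = ∇_i R`.  The curvature sign convention is
fixed by the commutation identity `∇_i∇_j∇_k f - ∇_j∇_i∇_k f = R_{ijkl}∇_l f` together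
with Hamilton's identity `∇_i R = 2R_{ij}∇_j f`. -/
theorem cotton_eq_neg_weyl_contract_grad_add_D
    (n : ℕ) (hn : 3 ≤ n) (ρ R : ℝ)
    (Ric Hess : Fin n → Fin n → ℝ)
    (dRic d3f : Fin n → Fin n → Fin n → ℝ)
    (Rm : Fin n → Fin n → Fin n → Fin n → ℝ)
    (df dR : Fin n → ℝ)
    (hRtr : R = ∑ i, Ric i i)
    -- the soliton equation R_{ij} + ∇_i∇_j f = ρ g_{ij}
    (hsol : ∀ i j, Ric i j + Hess i j = ρ * kd i j)
    -- its covariant derivative: ∇_i R_{jk} + ∇_i∇_j∇_k f = 0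
    (hdsol : ∀ i j k, dRic i j k + d3f i j k = 0)
    -- commutation identity for third derivatives of f
    (hcomm : ∀ i j k, d3f i j k - d3f j i k = ∑ l, Rm i j k l * df l)
    -- Hamilton's identity ∇_i R = 2 R_{ij} ∇_j f
    (hHam : ∀ i, dR i = 2 * ∑ j, Ric i j * df j)
    (W : Fin n → Fin n → Fin n → Fin n → ℝ)
    (hW : ∀ i j k l, W i j k l = Rm i j k l
      - (1 / ((n : ℝ) - 2)) * (kd i k * Ric j l - kd i l * Ric j k
          - kd j k * Ric i l + kd j l * Ric i k)
      + (R / (((n : ℝ) - 1) * ((n : ℝ) - 2))) * (kd i k * kd j l - kd i l * kd j k))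
    (C : Fin n → Fin n → Fin n → ℝ)
    (hC : ∀ i j k, C i j k = dRic i j k - dRic j i k
      - (1 / (2 * ((n : ℝ) - 1))) * (kd j k * dR i - kd i k * dR j))
    (D : Fin n → Fin n → Fin n → ℝ)
    (hD : ∀ i j k, D i j k =
      (1 / ((n : ℝ) - 2)) * (Ric j k * df i - Ric i k * df j)
      + (1 / (2 * ((n : ℝ) - 1) * ((n : ℝ) - 2))) * (kd j k * dR i - kd i k * dR j)
      - (R / (((n : ℝ) - 1) * ((n : ℝ) - 2))) * (kd j k * df i - kd i k * df j)) :
    ∀ i j k, C i j k = -(∑ l, W i j k l * df l) + D i j k := by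
  intro i j k
  have hn3 : (3:ℝ) ≤ (n:ℝ) := by exact_mod_cast hn
  have h2 : ((n:ℝ) - 2) ≠ 0 := by linarith
  have h1 : ((n:ℝ) - 1) ≠ 0 := by linarith
  have hkd : ∀ (a : Fin n) (X : Fin n → ℝ), ∑ l, kd a l * X l = X a := by
    intro a X
    simp [kd, ite_mul]
  have hRicd : ∀ a : Fin n, ∑ l, Ric a l * df l = dR a / 2 := by
    intro a; have := hHam a; linarith
  have hS : ∑ l, W i j k l * df l =
      (∑ l, Rm i j k l * df l)
      - (1 / ((n : ℝ) - 2)) * (kd i k * (dR j / 2))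
      + (1 / ((n : ℝ) - 2)) * (Ric j k * df i)
      + (1 / ((n : ℝ) - 2)) * (kd j k * (dR i / 2))
      - (1 / ((n : ℝ) - 2)) * (Ric i k * df j)
      + (R / (((n : ℝ) - 1) * ((n : ℝ) - 2))) * (kd i k * df j)
      - (R / (((n : ℝ) - 1) * ((n : ℝ) - 2))) * (kd j k * df i) := by
    have expand : ∀ l, W i j k l * df l =
        Rm i j k l * df l
        - (1/((n:ℝ)-2)) * (kd i k * (Ric j l * df l))
        + (1/((n:ℝ)-2)) * (kd i l * (Ric j k * df l))
        + (1/((n:ℝ)-2)) * (kd j k * (Ric i l * df l))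
        - (1/((n:ℝ)-2)) * (kd j l * (Ric i k * df l))
        + (R/(((n:ℝ)-1)*((n:ℝ)-2))) * (kd i k * (kd j l * df l))
        - (R/(((n:ℝ)-1)*((n:ℝ)-2))) * (kd i l * (kd j k * df l)) := by
      intro l; rw [hW]; ring
    rw [Finset.sum_congr rfl (fun l _ => expand l)]
    simp only [Finset.sum_sub_distrib, Finset.sum_add_distrib, ← Finset.mul_sum,
      hkd, hRicd]
  have hcot : dRic i j k - dRic j i k = -(∑ l, Rm i j k l * df l) := by
    have ha := hdsol i j k
    have hb := hdsol j i k
    have hc := hcomm i j k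
    linarith
  rw [hC, hD, hS, hcot]
  field_simp
  ring
end

section
/- On a gradient Ricci soliton with R_{ij} + ∇_i∇_j f = ρ g_{ij}, the Bach tensor satisfies (n-2) B_{ij} = -∇_k D_{ikj} - ((n-3)/(n-2)) C_{jli} ∇_l f. -/
open Finset

/-!
Expand `∇_k D_{ikj}` by the Leibniz rule. By skew-symmetry, `∇_k C_{ikj} = -∇_k C_{kij}`. Pair
symmetry turns `∇_k W_{ikjl}` into the divergence `∇_k W_{jlik}`, which is a multiple of
`C_{jli}`. Finally the soliton equation gives `Hess = ρ g - Ric`, and the `ρ g` part dies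
against the trace-free Weyl tensor, so `W_{ikjl} ∇_k∇_l f = -R_{kl} W_{ikjl}`.
-/

section Contractions

variable {n : ℕ}

lemma sum_sum_mul_const_mul_kd (T : Fin n → Fin n → ℝ) (ρ : ℝ) :
    ∑ k, ∑ l, T k l * (ρ * kd k l) = ρ * ∑ k, T k k := by
  rw [mul_sum]
  refine sum_congr rfl fun k _ => ?_
  simp [kd, mul_ite, mul_comm]

lemma sum_dC_trace_eq_neg_of_skew (dC : Fin n → Fin n → Fin n → Fin n → ℝ)
    (hdCskew : ∀ m i j k, dC m i j k = -dC m j i k) (i j : Fin n) :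
    ∑ k, dC k i k j = -∑ k, dC k k i j := by
  rw [← sum_neg_distrib]
  exact sum_congr rfl fun k _ => hdCskew k i k j

lemma sum_dW_contract_grad_eq (c : ℝ) (C : Fin n → Fin n → Fin n → ℝ)
    (dW : Fin n → Fin n → Fin n → Fin n → Fin n → ℝ) (df : Fin n → ℝ)
    (hdWpair : ∀ m i j k l, dW m i j k l = dW m k l i j)
    (hdivW : ∀ i j k, ∑ l, dW l i j k l = -c * C i j k) (i j : Fin n) :
    ∑ k, ∑ l, dW k i k j l * df l = -(c * ∑ l, C j l i * df l) := by
  rw [sum_comm, mul_sum, ← sum_neg_distrib]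
  refine sum_congr rfl fun l _ => ?_
  have hdiv : ∑ k, dW k i k j l = -c * C j l i := by
    rw [← hdivW]
    exact sum_congr rfl fun k _ => hdWpair k i k j l
  rw [← sum_mul, hdiv]
  ring

lemma sum_weyl_mul_hess_eq_neg_ric_of_soliton (ρ : ℝ) (Ric Hess : Fin n → Fin n → ℝ)
    (W : Fin n → Fin n → Fin n → Fin n → ℝ)
    (hsol : ∀ i j, Ric i j + Hess i j = ρ * kd i j) (hWtr : ∀ i j, ∑ k, W i k j k = 0)
    (i j : Fin n) :
    ∑ k, ∑ l, W i k j l * Hess k l = -∑ k, ∑ l, Ric k l * W i k j l := by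
  have hHess : ∀ k l, W i k j l * Hess k l = W i k j l * (ρ * kd k l) - Ric k l * W i k j l := by
    intro k l
    rw [← hsol k l]
    ring
  simp only [hHess, sum_sub_distrib, sum_sum_mul_const_mul_kd, hWtr, mul_zero, zero_sub]

lemma sum_dD_trace_eq_of_leibniz (Hess : Fin n → Fin n → ℝ)
    (W : Fin n → Fin n → Fin n → Fin n → ℝ) (dC dD : Fin n → Fin n → Fin n → Fin n → ℝ)
    (dW : Fin n → Fin n → Fin n → Fin n → Fin n → ℝ) (df : Fin n → ℝ)
    (hdD : ∀ m i j k, dD m i j k = dC m i j k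
      + ∑ l, (dW m i j k l * df l + W i j k l * Hess m l)) (i j : Fin n) :
    ∑ k, dD k i k j = ∑ k, dC k i k j + ∑ k, ∑ l, dW k i k j l * df l
      + ∑ k, ∑ l, W i k j l * Hess k l := by
  simp only [hdD, sum_add_distrib, add_assoc]

end Contractions

/-- Tensors are expressed in an orthonormal frame at a point: `dC m i j k = ∇_m C_{ijk}`,
`dW m i j k l = ∇_m W_{ijkl}`, `dD m i j k = ∇_m D_{ijk}`, `Hess i j = ∇_i∇_j f`. -/
theorem bach_eq_divD_add_cotton_grad_general
    (n : ℕ) (ρ : ℝ)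
    (Ric Hess B : Fin n → Fin n → ℝ)
    (C : Fin n → Fin n → Fin n → ℝ)
    (W : Fin n → Fin n → Fin n → Fin n → ℝ)
    (dC dD : Fin n → Fin n → Fin n → Fin n → ℝ)
    (dW : Fin n → Fin n → Fin n → Fin n → Fin n → ℝ)
    (df : Fin n → ℝ)
    -- the soliton equation
    (hsol : ∀ i j, Ric i j + Hess i j = ρ * kd i j)
    -- definition of the Bach tensor: B_{ij} = (1/(n-2))(∇_k C_{kij} + R_{kl} W_{ikjl})
    (hB : ∀ i j, ((n : ℝ) - 2) * B i j = (∑ k, dC k k i j) + ∑ k, ∑ l, Ric k l * W i k j l)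
    -- Leibniz rule for ∇D
    (hdD : ∀ m i j k, dD m i j k = dC m i j k
      + ∑ l, (dW m i j k l * df l + W i j k l * Hess m l))
    -- skew-symmetry of the Cotton tensor (and of its derivative) in the first two indices
    (hdCskew : ∀ m i j k, dC m i j k = -dC m j i k)
    -- trace-freeness and pair symmetry of the Weyl tensor
    (hWtr : ∀ i j, ∑ k, W i k j k = 0)
    (hdWpair : ∀ m i j k l, dW m i j k l = dW m k l i j)
    -- divergence of the Weyl tensor: ∇_l W_{ijkl} = -((n-3)/(n-2)) C_{ijk}
    (hdivW : ∀ i j k, ∑ l, dW l i j k l = -(((n : ℝ) - 3)/((n : ℝ) - 2)) * C i j k) :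
    ∀ i j, ((n : ℝ) - 2) * B i j =
      -(∑ k, dD k i k j) - (((n : ℝ) - 3)/((n : ℝ) - 2)) * ∑ l, C j l i * df l := by
  intro i j
  rw [hB, sum_dD_trace_eq_of_leibniz Hess W dC dD dW df hdD,
    sum_dC_trace_eq_neg_of_skew dC hdCskew,
    sum_dW_contract_grad_eq _ C dW df hdWpair hdivW,
    sum_weyl_mul_hess_eq_neg_ric_of_soliton ρ Ric Hess W hsol hWtr]
  ring

/-- On a gradient Ricci soliton `Ric + Hess f = ρ g` (n ≥ 4), the Bach
tensor satisfies `(n-2) B_{ij} = -∇_k D_{ikj} - ((n-3)/(n-2)) C_{jli} ∇_l f`.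
Tensors are expressed in an orthonormal frame at a point: `dC m i j k = ∇_m C_{ijk}`,
`dW m i j k l = ∇_m W_{ijkl}`, `dD m i j k = ∇_m D_{ijk}`, `Hess i j = ∇_i∇_j f`. -/
theorem bach_eq_divD_add_cotton_grad
    (n : ℕ) (hn : 4 ≤ n) (ρ : ℝ)
    (Ric Hess B : Fin n → Fin n → ℝ)
    (C D : Fin n → Fin n → Fin n → ℝ)
    (W : Fin n → Fin n → Fin n → Fin n → ℝ)
    (dC dD : Fin n → Fin n → Fin n → Fin n → ℝ)
    (dW : Fin n → Fin n → Fin n → Fin n → Fin n → ℝ)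
    (df : Fin n → ℝ)
    -- the soliton equation
    (hsol : ∀ i j, Ric i j + Hess i j = ρ * kd i j)
    -- definition of the Bach tensor: B_{ij} = (1/(n-2))(∇_k C_{kij} + R_{kl} W_{ikjl})
    (hB : ∀ i j, ((n : ℝ) - 2) * B i j = (∑ k, dC k k i j) + ∑ k, ∑ l, Ric k l * W i k j l)
    -- D_{ijk} = C_{ijk} + W_{ijkl}∇_l f
    (hD : ∀ i j k, D i j k = C i j k + ∑ l, W i j k l * df l)
    -- Leibniz rule for ∇D
    (hdD : ∀ m i j k, dD m i j k = dC m i j k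
      + ∑ l, (dW m i j k l * df l + W i j k l * Hess m l))
    -- skew-symmetry of the Cotton tensor (and of its derivative) in the first two indices
    (hdCskew : ∀ m i j k, dC m i j k = -dC m j i k)
    -- trace-freeness and pair symmetry of the Weyl tensor
    (hWtr : ∀ i j, ∑ k, W i k j k = 0)
    (hdWpair : ∀ m i j k l, dW m i j k l = dW m k l i j)
    -- divergence of the Weyl tensor: ∇_l W_{ijkl} = -((n-3)/(n-2)) C_{ijk}
    (hdivW : ∀ i j k, ∑ l, dW l i j k l = -(((n : ℝ) - 3)/((n : ℝ) - 2)) * C i j k) :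
    ∀ i j, ((n : ℝ) - 2) * B i j =
      -(∑ k, dD k i k j) - (((n : ℝ) - 3)/((n : ℝ) - 2)) * ∑ l, C j l i * df l :=
  bach_eq_divD_add_cotton_grad_general n ρ Ric Hess B C W dC dD dW df hsol hB hdD hdCskew hWtr
    hdWpair hdivW
end

section
/- Let W be an algebraic Weyl-type tensor on a 4-dimensional inner product space: W has the symmetries of the Riemann tensor (W_{ijkl} = -W_{jikl} = -W_{ijlk} = W_{klij}, first Bianchi identity) and is totally trace-free (g^{ik}W_{ikjl} = 0 for all index pairs). If for an orthonormal basis e_1, e_2, e_3, e_4 one has W_{1ijk} = 0 for all i, j, k, then W = 0. -/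
open Finset

/-- An algebraic Weyl-type tensor on a 4-dimensional inner product space
(expressed in components with respect to an orthonormal basis `e_1, ..., e_4`, indexed
here by `Fin 4` with `0` playing the role of `e_1`) which has the symmetries of the
Riemann tensor, is totally trace-free, and satisfies `W_{1ijk} = 0` for all `i,j,k`,
vanishes identically. -/
theorem weyl_vanishes_of_first_index_vanishes
    (W : Fin 4 → Fin 4 → Fin 4 → Fin 4 → ℝ)
    (hskew1 : ∀ i j k l, W i j k l = -W j i k l)
    (hskew2 : ∀ i j k l, W i j k l = -W i j l k)
    (hpair : ∀ i j k l, W i j k l = W k l i j)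
    (hbianchi : ∀ i j k l, W i j k l + W j k i l + W k i j l = 0)
    (htrace : ∀ j l, ∑ i, W i j i l = 0)
    (h1 : ∀ i j k, W 0 i j k = 0) :
    ∀ i j k l, W i j k l = 0 := by
  have z1 : ∀ i k l, W i i k l = 0 := fun i k l => by have := hskew1 i i k l; linarith
  have z2 : ∀ i j k, W i j k k = 0 := fun i j k => by have := hskew2 i j k k; linarith
  have a1 : ∀ i j k, W i 0 j k = 0 := fun i j k => by
    have := hskew1 i 0 j k; rw [h1] at this; linarith
  have a2 : ∀ i j k, W i j 0 k = 0 := fun i j k => by rw [hpair]; exact h1 _ _ _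
  have a3 : ∀ i j k, W i j k 0 = 0 := fun i j k => by rw [hpair]; exact a1 _ _ _
  have t : ∀ j l, W 1 j 1 l + W 2 j 2 l + W 3 j 3 l = 0 := by
    intro j l
    have h := htrace j l
    rw [Fin.sum_univ_four, h1] at h
    linarith
  -- the six off-diagonal type components
  have w3132 : W 3 1 3 2 = 0 := by
    have := t 1 2; have := z1 1 1 2; have := z2 2 1 2; linarith
  have w2123 : W 2 1 2 3 = 0 := by
    have := t 1 3; have := z1 1 1 3; have := z2 3 1 3; linarith
  have w3231 : W 3 2 3 1 = 0 := by
    have := t 2 1; have := z2 1 2 1; have := z1 2 2 1; linarith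
  have w1213 : W 1 2 1 3 = 0 := by
    have := t 2 3; have := z1 2 2 3; have := z2 3 2 3; linarith
  have w2321 : W 2 3 2 1 = 0 := by
    have := t 3 1; have := z2 1 3 1; have := z1 3 3 1; linarith
  have w1312 : W 1 3 1 2 = 0 := by
    have := t 3 2; have := z2 2 3 2; have := z1 3 3 2; linarith
  -- diagonal components
  have r21 : W 2 1 2 1 = W 1 2 1 2 := by
    have h := hskew1 2 1 2 1; have h' := hskew2 1 2 2 1; have h'' := hpair 1 2 2 1
    have h''' := hskew1 2 1 1 2; linarith
  have r31 : W 3 1 3 1 = W 1 3 1 3 := by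
    have h := hskew1 3 1 3 1; have h' := hskew2 1 3 3 1; have h'' := hpair 1 3 3 1
    have h''' := hskew1 3 1 1 3; linarith
  have r32 : W 3 2 3 2 = W 2 3 2 3 := by
    have h := hskew1 3 2 3 2; have h' := hskew2 2 3 3 2; have h'' := hpair 2 3 3 2
    have h''' := hskew1 3 2 2 3; linarith
  have d12 : W 1 2 1 2 = 0 := by
    have h1' := t 1 1; have h2' := t 2 2; have h3' := t 3 3
    have := z1 1 1 1; have := z1 2 2 2; have := z1 3 3 3
    linarith
  have d13 : W 1 3 1 3 = 0 := by
    have h1' := t 1 1; have h2' := t 2 2; have h3' := t 3 3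
    have := z1 1 1 1; have := z1 2 2 2; have := z1 3 3 3
    linarith
  have d23 : W 2 3 2 3 = 0 := by
    have h1' := t 1 1; have h2' := t 2 2; have h3' := t 3 3
    have := z1 1 1 1; have := z1 2 2 2; have := z1 3 3 3
    linarith
  have d21 : W 2 1 2 1 = 0 := by rw [r21]; exact d12
  have d31 : W 3 1 3 1 = 0 := by rw [r31]; exact d13
  have d32 : W 3 2 3 2 = 0 := by rw [r32]; exact d23
  -- all components of the form W a b a c vanish
  have nz : ∀ a b c, W a b a c = 0 := by
    intro a b c
    fin_cases a <;> fin_cases b <;> fin_cases c <;>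
      first
        | exact h1 _ _ _ | exact a1 _ _ _ | exact a2 _ _ _ | exact a3 _ _ _
        | exact z1 _ _ _ | exact z2 _ _ _
        | exact w3132 | exact w2123 | exact w3231 | exact w1213
        | exact w2321 | exact w1312
        | exact d12 | exact d13 | exact d23 | exact d21 | exact d31 | exact d32
  have n1 : ∀ a b c, W a b c a = 0 := fun a b c => by
    have := hskew2 a b c a; rw [nz] at this; linarith
  have n2 : ∀ a b c, W b a a c = 0 := fun a b c => by
    have := hskew1 b a a c; rw [nz] at this; linarith
  have n3 : ∀ a b c, W b a c a = 0 := fun a b c => by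
    have := hskew1 b a c a; rw [n1] at this; linarith
  intro i j k l
  fin_cases i <;> fin_cases j <;> fin_cases k <;> fin_cases l <;>
    first
      | exact h1 _ _ _ | exact a1 _ _ _ | exact a2 _ _ _ | exact a3 _ _ _
      | exact z1 _ _ _ | exact z2 _ _ _
      | exact nz _ _ _ | exact n1 _ _ _ | exact n2 _ _ _ | exact n3 _ _ _
end

section
/- On a gradient Ricci soliton with Ric + Hess f = ρ g and D_{ijk} = 0, at any point p where ∇f(p) ≠ 0, the gradient ∇f/|∇f| is an eigenvector of the Ricci tensor; equivalently, Ric(∇f, v) = 0 for every v orthogonal to ∇f. -/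
open Finset

/-- On a gradient Ricci soliton with `D_{ijk} = 0`, at any point where
`∇f ≠ 0` the gradient `∇f/|∇f|` is an eigenvector of the Ricci tensor; equivalently,
`Ric(∇f, v) = 0` for every `v` orthogonal to `∇f`.  Tensors are expressed in an
orthonormal frame at the point; Hamilton's identity `∇_i R = 2R_{ij}∇_j f` is assumed. -/
theorem grad_is_ricci_eigenvector_of_D_eq_zero
    (n : ℕ) (hn : 3 ≤ n) (R : ℝ)
    (Ric : Fin n → Fin n → ℝ)
    (df dR : Fin n → ℝ)
    (hRicsym : ∀ i j, Ric i j = Ric j i)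
    (hRtr : R = ∑ i, Ric i i)
    (hHam : ∀ i, dR i = 2 * ∑ j, Ric i j * df j)
    (D : Fin n → Fin n → Fin n → ℝ)
    (hD : ∀ i j k, D i j k =
      (1 / ((n : ℝ) - 2)) * (Ric j k * df i - Ric i k * df j)
      + (1 / (2 * ((n : ℝ) - 1) * ((n : ℝ) - 2))) * (kd j k * dR i - kd i k * dR j)
      - (R / (((n : ℝ) - 1) * ((n : ℝ) - 2))) * (kd j k * df i - kd i k * df j))
    (hD0 : ∀ i j k, D i j k = 0)
    (hdf : df ≠ 0) :
    (∃ lam : ℝ, ∀ j, ∑ i, Ric i j * df i = lam * df j) ∧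
    (∀ v : Fin n → ℝ, (∑ i, v i * df i = 0) →
      ∑ i, ∑ j, Ric i j * df i * v j = 0) := by
  have hn3 : (3 : ℝ) ≤ (n : ℝ) := by exact_mod_cast hn
  have hN1 : ((n : ℝ) - 1) ≠ 0 := by nlinarith
  have hN2 : ((n : ℝ) - 2) ≠ 0 := by nlinarith
  -- cleared version of D = 0
  have hD' : ∀ i j k, 2*((n:ℝ)-1) * (Ric j k * df i - Ric i k * df j)
      + (kd j k * dR i - kd i k * dR j)
      - 2*R*(kd j k * df i - kd i k * df j) = 0 := by
    intro i j k
    have h := hD0 i j k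
    rw [hD] at h
    calc 2*((n:ℝ)-1) * (Ric j k * df i - Ric i k * df j)
        + (kd j k * dR i - kd i k * dR j)
        - 2*R*(kd j k * df i - kd i k * df j)
        = 2*((n:ℝ)-1)*((n:ℝ)-2) *
          ((1 / ((n : ℝ) - 2)) * (Ric j k * df i - Ric i k * df j)
          + (1 / (2 * ((n : ℝ) - 1) * ((n : ℝ) - 2))) * (kd j k * dR i - kd i k * dR j)
          - (R / (((n : ℝ) - 1) * ((n : ℝ) - 2))) * (kd j k * df i - kd i k * df j)) := by
          field_simp
      _ = 0 := by rw [h, mul_zero]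
  set w : Fin n → ℝ := fun j => ∑ i, Ric i j * df i with hw
  have hHam' : ∀ i, dR i = 2 * w i := by
    intro i
    rw [hHam]
    congr 1
    exact Finset.sum_congr rfl fun j _ => by rw [hRicsym]
  set F : ℝ := ∑ j, df j * df j with hF
  set G : ℝ := ∑ j, dR j * df j with hG
  have expand : ∀ i k,
      2*((n:ℝ)-1) * (w k * df i - Ric i k * F)
      + (dR i * df k - kd i k * G)
      - 2*R*(df k * df i - kd i k * F) = 0 := by
    intro i k
    have hs : ∑ j, (2*((n:ℝ)-1) * (Ric j k * df i - Ric i k * df j)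
        + (kd j k * dR i - kd i k * dR j)
        - 2*R*(kd j k * df i - kd i k * df j)) * df j = 0 :=
      Finset.sum_eq_zero fun j _ => by rw [hD' i j k, zero_mul]
    have hexp : ∑ j, (2*((n:ℝ)-1) * (Ric j k * df i - Ric i k * df j)
        + (kd j k * dR i - kd i k * dR j)
        - 2*R*(kd j k * df i - kd i k * df j)) * df j
        = 2*((n:ℝ)-1) * (w k * df i - Ric i k * F)
          + (dR i * df k - kd i k * G)
          - 2*R*(df k * df i - kd i k * F) := by
      have h1 : ∑ j, kd j k * df j = df k := by simp [kd]
      have h2 : w k = ∑ j, Ric j k * df j := rfl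
      rw [h2, hF, hG, ← h1]
      simp only [mul_sub, sub_mul, Finset.mul_sum, Finset.sum_mul,
        ← Finset.sum_sub_distrib, ← Finset.sum_add_distrib]
      exact Finset.sum_congr rfl fun j _ => by ring
    rw [hexp] at hs
    exact hs
  have hkdsym : ∀ i k : Fin n, kd i k = kd (n := n) k i := by
    intro i k
    simp [kd, eq_comm]
  have key : ∀ i k, w k * df i = w i * df k := by
    intro i k
    have e1 := expand i k
    have e2 := expand k i
    have h1 := hHam' i
    have h2 := hHam' k
    have h3 := hkdsym i k
    have h4 := hRicsym i k
    have hz : 2*((n:ℝ)-2) * (w k * df i - w i * df k) = 0 := by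
      linear_combination e1 - e2 - df k * h1 + df i * h2 - (2*R*F - G) * h3
        + 2*((n:ℝ)-1)*F * h4
    have h2N2 : (2:ℝ)*((n:ℝ)-2) ≠ 0 := by
      intro h; apply hN2; linarith [mul_eq_zero.mp h]
    have := (mul_eq_zero.mp hz).resolve_left (by
      intro h; exact hN2 (by linarith))
    linarith
  obtain ⟨i0, hi0⟩ : ∃ i0, df i0 ≠ 0 := Function.ne_iff.mp hdf
  have hlam : ∀ j, w j = (w i0 / df i0) * df j := by
    intro j
    have := key j i0
    field_simp
    linarith
  refine ⟨⟨w i0 / df i0, hlam⟩, ?_⟩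
  intro v hv
  calc ∑ i, ∑ j, Ric i j * df i * v j
      = ∑ j, ∑ i, Ric i j * df i * v j := Finset.sum_comm
    _ = ∑ j, w j * v j := by
        refine Finset.sum_congr rfl fun j _ => ?_
        rw [hw, Finset.sum_mul]
    _ = (w i0 / df i0) * ∑ j, v j * df j := by
        rw [Finset.mul_sum]
        exact Finset.sum_congr rfl fun j _ => by rw [hlam j]; ring
    _ = 0 := by rw [hv, mul_zero]
end

section
/- At any point p of a gradient Ricci soliton (Ric + Hess f = ρ g) where ∇f(p) ≠ 0, the squared norm of D satisfies |D_{ijk}|^2 = (2|∇f|^4/(n-2)^2) |h_{ab} - (H/(n-1)) g_{ab}|^2 + (1/(2(n-1)(n-2))) |∇^Σ R|^2, where h_{ab} and H are the second fundamental form and mean curvature of the level surface Σ = {f = f(p)} and ∇^Σ R is the tangential part of ∇R. -/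
open Finset

/-!
In an orthonormal frame with `e_0 = ∇f/|∇f|`, the soliton identity `∇R = 2 Ric(∇f)` reads
`∇_i R = 2|∇f| R_{i0}`. Substituting this into `D`, up to antisymmetry in the first two
indices its components are, for tangent indices `a, b` and any `c`,
`D_{0a0} = |∇f| R_{a0}/(n-1)`, `D_{0ab} = |∇f| (R_{ab} - (tr_Σ Ric/(n-1)) δ_{ab})/(n-2)` and
`D_{abc} = |∇f| (δ_{bc} R_{a0} - δ_{ac} R_{b0})/((n-1)(n-2))`, the last ones contributing
`2(n-2)|∇f|² Σ_a R_{a0}²/((n-1)(n-2))²` to `|D|²`. Since `Hess f = ρ g - Ric`, the tracefree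
part of `Ric|_Σ` is `-|∇f|` times that of `h`, and `R_{a0} = ∇_a R/(2|∇f|)`; collecting the
squares gives the formula.
-/

noncomputable def dTensor {n : ℕ} (Ric : Fin n → Fin n → ℝ) (R : ℝ) (df dR : Fin n → ℝ)
    (i j k : Fin n) : ℝ :=
  (1 / ((n : ℝ) - 2)) * (Ric j k * df i - Ric i k * df j)
    + (1 / (2 * ((n : ℝ) - 1) * ((n : ℝ) - 2))) * (kd j k * dR i - kd i k * dR j)
    - (R / (((n : ℝ) - 1) * ((n : ℝ) - 2))) * (kd j k * df i - kd i k * df j)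

theorem Finset.sum_eq_add_sum_filter_ne {ι M : Type*} [Fintype ι] [DecidableEq ι]
    [AddCommMonoid M] (p : ι) (f : ι → M) :
    ∑ i, f i = f p + ∑ i ∈ univ.filter (· ≠ p), f i := by
  rw [filter_ne', add_sum_erase _ _ (mem_univ p)]

theorem sum_sq_eq_of_antisymm {ι : Type*} [Fintype ι] [DecidableEq ι] (p : ι)
    (D : ι → ι → ι → ℝ) (hD : ∀ i j k, D j i k = -D i j k) :
    ∑ i, ∑ j, ∑ k, D i j k ^ 2
      = 2 * ∑ j ∈ univ.filter (· ≠ p), ∑ k, D p j k ^ 2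
        + ∑ i ∈ univ.filter (· ≠ p), ∑ j ∈ univ.filter (· ≠ p), ∑ k, D i j k ^ 2 := by
  have hdiag : ∑ k, D p p k ^ 2 = 0 :=
    sum_eq_zero fun k _ => by simp [show D p p k = 0 by linarith [hD p p k]]
  have hswap : ∀ i, ∑ k, D i p k ^ 2 = ∑ k, D p i k ^ 2 := fun i => by simp only [hD i p, neg_sq]
  rw [sum_eq_add_sum_filter_ne p, sum_eq_add_sum_filter_ne p (fun j => ∑ k, D p j k ^ 2), hdiag,
    sum_congr rfl fun i _ => sum_eq_add_sum_filter_ne p (fun j => ∑ k, D i j k ^ 2),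
    sum_add_distrib, sum_congr rfl fun i _ => hswap i]
  ring

section Kronecker

variable {n : ℕ}

theorem kd_comm (i j : Fin n) : kd i j = kd j i := by simp only [kd, eq_comm]

theorem kd_self (i : Fin n) : kd i i = 1 := if_pos rfl

theorem kd_of_ne {i j : Fin n} (h : i ≠ j) : kd i j = 0 := if_neg h

theorem sum_kd_mul (i : Fin n) (f : Fin n → ℝ) : ∑ j, kd i j * f j = f i := by
  simp [kd]

theorem sum_kd_mul_of_mem {T : Finset (Fin n)} {i : Fin n} (hi : i ∈ T) (f : Fin n → ℝ) :
    ∑ j ∈ T, kd i j * f j = f i := by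
  simp [kd, hi]

theorem sum_sq_kd_mul_sub_kd_mul (a b : Fin n) (u v : ℝ) :
    ∑ c, (kd b c * u - kd a c * v) ^ 2 = u ^ 2 + v ^ 2 - 2 * kd a b * u * v := by
  have h : ∀ c, (kd b c * u - kd a c * v) ^ 2
      = kd b c * u ^ 2 + kd a c * v ^ 2 - 2 * u * v * (kd a c * kd b c) := by
    intro c; unfold kd; split_ifs <;> ring
  simp only [h, sum_add_distrib, sum_sub_distrib, ← mul_sum, sum_kd_mul, kd_comm b a]
  ring

theorem sum_sum_sum_sq_kd_mul_sub_kd_mul (T : Finset (Fin n)) (x : Fin n → ℝ) :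
    ∑ a ∈ T, ∑ b ∈ T, ∑ c, (kd b c * x a - kd a c * x b) ^ 2
      = 2 * (#T - 1) * ∑ a ∈ T, x a ^ 2 := by
  have inner : ∀ a ∈ T, ∑ b ∈ T, ∑ c, (kd b c * x a - kd a c * x b) ^ 2
      = (#T - 2) * x a ^ 2 + ∑ b ∈ T, x b ^ 2 := by
    intro a ha
    have hcross : ∑ b ∈ T, 2 * kd a b * x a * x b = 2 * x a ^ 2 := by
      calc ∑ b ∈ T, 2 * kd a b * x a * x b = ∑ b ∈ T, kd a b * (2 * x a * x b) :=
            sum_congr rfl fun b _ => by ring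
        _ = 2 * x a ^ 2 := by rw [sum_kd_mul_of_mem ha (fun b => 2 * x a * x b)]; ring
    simp only [sum_sq_kd_mul_sub_kd_mul, sum_add_distrib, sum_sub_distrib, sum_const, nsmul_eq_mul,
      hcross]
    ring
  rw [sum_congr rfl inner, sum_add_distrib, ← mul_sum, sum_const, nsmul_eq_mul]
  ring

end Kronecker

theorem dTensor_antisymm {n : ℕ} (Ric : Fin n → Fin n → ℝ) (R : ℝ) (df dR : Fin n → ℝ)
    (i j k : Fin n) : dTensor Ric R df dR j i k = -dTensor Ric R df dR i j k := by
  unfold dTensor; ring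

theorem hess_div_sub_mean_curvature_mul_kd {n : ℕ} {T : Finset (Fin n)} {ρ s H : ℝ}
    {Ric Hess : Fin n → Fin n → ℝ} (hs : s ≠ 0) (hT : T.Nonempty)
    (hsol : ∀ i j, Ric i j + Hess i j = ρ * kd i j) (hH : H = ∑ a ∈ T, Hess a a / s)
    (a b : Fin n) :
    Hess a b / s - H / #T * kd a b = -(Ric a b - (∑ c ∈ T, Ric c c) / #T * kd a b) / s := by
  have hHess : ∀ a b, Hess a b = ρ * kd a b - Ric a b := fun a b => by linarith [hsol a b]
  have hT' : (#T : ℝ) ≠ 0 := by exact_mod_cast hT.card_pos.ne'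
  rw [hH, ← sum_div, sum_congr rfl fun c _ => by rw [hHess, kd_self, mul_one], sum_sub_distrib,
    sum_const, nsmul_eq_mul, hHess]
  field_simp
  ring

section AdaptedFrame

variable {n : ℕ} [NeZero n] (Ric : Fin n → Fin n → ℝ) (R s : ℝ)

theorem dTensor_zero_tangent_zero (hn : 2 < n) {a : Fin n} (ha : a ≠ 0) :
    dTensor Ric R (Pi.single 0 s) (fun i => 2 * s * Ric i 0) 0 a 0
      = s * Ric a 0 / ((n : ℝ) - 1) := by
  have hn' : (2 : ℝ) < n := by exact_mod_cast hn
  have h1 : (n : ℝ) - 1 ≠ 0 := by linarith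
  have h2 : (n : ℝ) - 2 ≠ 0 := by linarith
  simp only [dTensor, Pi.single_eq_same, Pi.single_eq_of_ne ha, kd_self, kd_of_ne ha]
  field_simp
  ring

theorem dTensor_zero_tangent_tangent {t : ℝ} (hR : R = Ric 0 0 + t) {a b : Fin n}
    (ha : a ≠ 0) (hb : b ≠ 0) :
    dTensor Ric R (Pi.single 0 s) (fun i => 2 * s * Ric i 0) 0 a b
      = s * (Ric a b - t / ((n : ℝ) - 1) * kd a b) / ((n : ℝ) - 2) := by
  simp only [dTensor, Pi.single_eq_same, Pi.single_eq_of_ne ha, kd_of_ne hb.symm, hR]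
  generalize (n : ℝ) - 1 = e₁; generalize (n : ℝ) - 2 = e₂
  ring

theorem dTensor_tangent_tangent {a b : Fin n} (ha : a ≠ 0) (hb : b ≠ 0) (k : Fin n) :
    dTensor Ric R (Pi.single 0 s) (fun i => 2 * s * Ric i 0) a b k
      = s / (((n : ℝ) - 1) * ((n : ℝ) - 2)) * (kd b k * Ric a 0 - kd a k * Ric b 0) := by
  simp only [dTensor, Pi.single_eq_of_ne ha, Pi.single_eq_of_ne hb]
  generalize (n : ℝ) - 1 = e₁; generalize (n : ℝ) - 2 = e₂
  ring

theorem sum_sq_dTensor_zero_tangent (hn : 2 < n) {t : ℝ} (hR : R = Ric 0 0 + t) {a : Fin n}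
    (ha : a ≠ 0) :
    ∑ k, dTensor Ric R (Pi.single 0 s) (fun i => 2 * s * Ric i 0) 0 a k ^ 2
      = (s * Ric a 0 / ((n : ℝ) - 1)) ^ 2
        + ∑ k ∈ univ.filter (· ≠ 0),
            (s * (Ric a k - t / ((n : ℝ) - 1) * kd a k) / ((n : ℝ) - 2)) ^ 2 := by
  rw [sum_eq_add_sum_filter_ne 0, dTensor_zero_tangent_zero _ _ _ hn ha]
  congr 1
  exact sum_congr rfl fun k hk => by
    rw [dTensor_zero_tangent_tangent _ _ _ hR ha (mem_filter.mp hk).2]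

theorem sum_sq_dTensor_tangent_tangent {T : Finset (Fin n)} (hT : ∀ a ∈ T, a ≠ 0) :
    ∑ a ∈ T, ∑ b ∈ T, ∑ k, dTensor Ric R (Pi.single 0 s) (fun i => 2 * s * Ric i 0) a b k ^ 2
      = (s / (((n : ℝ) - 1) * ((n : ℝ) - 2))) ^ 2 * (2 * (#T - 1) * ∑ a ∈ T, Ric a 0 ^ 2) := by
  rw [← sum_sum_sum_sq_kd_mul_sub_kd_mul]
  simp only [mul_sum]
  refine sum_congr rfl fun a ha => sum_congr rfl fun b hb => sum_congr rfl fun k _ => ?_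
  rw [dTensor_tangent_tangent _ _ _ (hT a ha) (hT b hb), mul_pow]

end AdaptedFrame

/-- In the orthonormal frame at `p` with `e_0 = ∇f/|∇f|`, the indices `≠ 0` span `T_pΣ`, so
`Hess a b / s` is `h_{ab}` and `dR a` for `a ≠ 0` is `∇^Σ R`. -/
theorem normD_sq_eq_level_surface_geometry_general
    (n : ℕ) (hn : 3 ≤ n) [NeZero n] (ρ R s H : ℝ)
    (Ric Hess : Fin n → Fin n → ℝ)
    (df dR : Fin n → ℝ)
    (hs : 0 < s)
    -- adapted frame: ∇f = s·e_1
    (hdf : ∀ i, df i = if i = 0 then s else 0)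
    (hsol : ∀ i j, Ric i j + Hess i j = ρ * kd i j)
    (hRtr : R = ∑ i, Ric i i)
    (hHam : ∀ i, dR i = 2 * ∑ j, Ric i j * df j)
    -- mean curvature of the level surface
    (hH : H = ∑ a ∈ Finset.univ.filter (fun a : Fin n => a ≠ 0), Hess a a / s)
    (D : Fin n → Fin n → Fin n → ℝ)
    (hD : ∀ i j k, D i j k =
      (1 / ((n : ℝ) - 2)) * (Ric j k * df i - Ric i k * df j)
      + (1 / (2 * ((n : ℝ) - 1) * ((n : ℝ) - 2))) * (kd j k * dR i - kd i k * dR j)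
      - (R / (((n : ℝ) - 1) * ((n : ℝ) - 2))) * (kd j k * df i - kd i k * df j)) :
    ∑ i, ∑ j, ∑ k, (D i j k)^2
      = (2 * s^4 / ((n : ℝ) - 2)^2) *
          (∑ a ∈ Finset.univ.filter (fun a : Fin n => a ≠ 0),
            ∑ b ∈ Finset.univ.filter (fun b : Fin n => b ≠ 0),
              (Hess a b / s - (H / ((n : ℝ) - 1)) * kd a b)^2)
        + (1 / (2 * ((n : ℝ) - 1) * ((n : ℝ) - 2))) *
            ∑ a ∈ Finset.univ.filter (fun a : Fin n => a ≠ 0), (dR a)^2 := by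
  set T := univ.filter (fun a : Fin n => a ≠ 0) with hT
  have hn' : (3 : ℝ) ≤ n := by exact_mod_cast hn
  have hcard : (#T : ℝ) = n - 1 := by
    rw [hT, filter_ne', card_erase_of_mem (mem_univ _), card_univ, Fintype.card_fin,
      Nat.cast_pred (NeZero.pos n)]
  have hTne : T.Nonempty := ⟨⟨1, by omega⟩, mem_filter.mpr ⟨mem_univ _, by simp [Fin.ext_iff]⟩⟩
  have hhess := hess_div_sub_mean_curvature_mul_kd hs.ne' hTne hsol hH
  rw [hcard] at hhess
  have hR : R = Ric 0 0 + ∑ a ∈ T, Ric a a := by rw [hRtr, sum_eq_add_sum_filter_ne 0]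
  obtain rfl : df = Pi.single 0 s := funext fun i => by rw [hdf, Pi.single_apply]
  obtain rfl : dR = fun i => 2 * s * Ric i 0 := funext fun i => by
    simp only [hHam, Pi.single_apply, mul_ite, mul_zero, sum_ite_eq', mem_univ, ↓reduceIte]
    ring
  obtain rfl : D = dTensor Ric R (Pi.single 0 s) (fun i => 2 * s * Ric i 0) := by
    ext i j k; exact hD i j k
  rw [sum_sq_eq_of_antisymm 0 _ (dTensor_antisymm _ _ _ _),
    sum_congr rfl fun j hj => sum_sq_dTensor_zero_tangent _ _ _ (by omega) hR (mem_filter.mp hj).2,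
    sum_sq_dTensor_tangent_tangent _ _ _ fun a ha => (mem_filter.mp ha).2,
    sum_congr rfl fun a _ => sum_congr rfl fun b _ => by rw [hhess a b], hcard]
  have h1 : (n : ℝ) - 1 ≠ 0 := by linarith
  have h2 : (n : ℝ) - 2 ≠ 0 := by linarith
  simp only [div_pow, mul_pow, neg_sq, ← sum_div, ← mul_sum, sum_add_distrib]
  field_simp
  ring

/-- At any point of a gradient Ricci soliton `Ric + Hess f = ρ g` where
`∇f ≠ 0`,
`|D|² = (2|∇f|⁴/(n-2)²)|h_{ab} - (H/(n-1))g_{ab}|² + (1/(2(n-1)(n-2)))|∇^Σ R|²`.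
We work in an adapted orthonormal frame at the point, with `e_1` (index `0`) equal to
`∇f/|∇f|`, so `df = (s, 0, …, 0)` with `s = |∇f| > 0`; indices `≠ 0` are tangent to the
level surface `Σ = {f = f(p)}`, the second fundamental form is
`h_{ab} = ∇_a∇_b f/|∇f| = Hess a b / s`, `H = tr h`, and `∇^Σ R` is the tangential part
of `∇R`. -/
theorem normD_sq_eq_level_surface_geometry
    (n : ℕ) (hn : 3 ≤ n) [NeZero n] (ρ R s H : ℝ)
    (Ric Hess : Fin n → Fin n → ℝ)
    (df dR : Fin n → ℝ)
    (hs : 0 < s)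
    -- adapted frame: ∇f = s·e_1
    (hdf : ∀ i, df i = if i = 0 then s else 0)
    (hsol : ∀ i j, Ric i j + Hess i j = ρ * kd i j)
    (hRicsym : ∀ i j, Ric i j = Ric j i)
    (hRtr : R = ∑ i, Ric i i)
    (hHam : ∀ i, dR i = 2 * ∑ j, Ric i j * df j)
    -- mean curvature of the level surface
    (hH : H = ∑ a ∈ Finset.univ.filter (fun a : Fin n => a ≠ 0), Hess a a / s)
    (D : Fin n → Fin n → Fin n → ℝ)
    (hD : ∀ i j k, D i j k =
      (1 / ((n : ℝ) - 2)) * (Ric j k * df i - Ric i k * df j)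
      + (1 / (2 * ((n : ℝ) - 1) * ((n : ℝ) - 2))) * (kd j k * dR i - kd i k * dR j)
      - (R / (((n : ℝ) - 1) * ((n : ℝ) - 2))) * (kd j k * df i - kd i k * df j)) :
    ∑ i, ∑ j, ∑ k, (D i j k)^2
      = (2 * s^4 / ((n : ℝ) - 2)^2) *
          (∑ a ∈ Finset.univ.filter (fun a : Fin n => a ≠ 0),
            ∑ b ∈ Finset.univ.filter (fun b : Fin n => b ≠ 0),
              (Hess a b / s - (H / ((n : ℝ) - 1)) * kd a b)^2)
        + (1 / (2 * ((n : ℝ) - 1) * ((n : ℝ) - 2))) *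
            ∑ a ∈ Finset.univ.filter (fun a : Fin n => a ≠ 0), (dR a)^2 :=
  normD_sq_eq_level_surface_geometry_general n hn ρ R s H Ric Hess df dR hs hdf hsol hRtr hHam hH D
    hD
end
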